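/- arXiv:2203.14483 — 3 statements merged into one kernel-verified Lean document; each statement's English description precedes it below -/
import Mathlib

section
/- Let (W,S) be a Coxeter system, J ⊆ S, x ∈ W^J, and s ∈ S with sx ∈ W^J and sx > x. Define, for z ∈ W^J, the sets X⁺_{≤z}, X⁻_{≤z}, X⁰_{≤z} of y ∈ W^J with y ≤ z and respectively sy ∈ W^J & sy > y, sy ∈ W^J & sy < y, sy ∉ W^J. Then s·(X⁺_{≤x}) = X⁻_{≤sx}, X⁺_{≤x} = X⁺_{≤sx}, and X⁰_{≤x} = X⁰_{≤sx}. -/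
/-!
Everything rests on the lifting property of the Bruhat order: if `s d < d`, `c ≤ d` and
`c < s c`, then `c ≤ s d` (and `s c ≤ s d` when `s c < c`). Applied to `d = s x`, it pushes every
`y ≤ s x` with `s y > y` below `x`; an element `y ∈ W^J` with `s y ∉ W^J` always has `s y > y`,
because `W^J` is closed under left descents. Together with monotonicity of `y ↦ s y` below an
`s`-ascent this gives the three identities. The lifting property follows from the strong exchange
condition, which in turn comes from the permutation representation of `W` on `T × {±1}`.
-/

open CoxeterSystem

variable {B W : Type*} [Group W] {M : CoxeterMatrix B}

/-- The Bruhat covering-type step: `v = u * t` for a reflection `t`, with `ℓ(u) < ℓ(v)`. -/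
def bruhatStep (cs : CoxeterSystem M W) (u v : W) : Prop :=
  ∃ t : W, cs.IsReflection t ∧ v = u * t ∧ cs.length u < cs.length v

/-- The Bruhat order `u ≤ v` on a Coxeter group. -/
def bruhatLE (cs : CoxeterSystem M W) : W → W → Prop :=
  Relation.ReflTransGen (bruhatStep cs)

/-- The strict Bruhat order `u < v`. -/
def bruhatLT (cs : CoxeterSystem M W) (u v : W) : Prop :=
  bruhatLE cs u v ∧ u ≠ v

/-- The set `W^J` of minimal length coset representatives of `W/W_J`:
`W^J = {w | w s > w for all s ∈ J}`. -/
def minCosetReps (cs : CoxeterSystem M W) (J : Set B) : Set W :=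
  {w | ∀ i ∈ J, bruhatLT cs w (w * cs.simple i)}

namespace CoxeterSystem

open scoped Classical

variable (cs : CoxeterSystem M W)

local prefix:100 "s" => cs.simple
local prefix:100 "π" => cs.wordProd
local prefix:100 "ℓ" => cs.length
local prefix:100 "ris " => cs.rightInvSeq

theorem simple_mul_mul_simple_eq_simple_iff (i : B) (t : W) : s i * t * s i = s i ↔ t = s i := by
  rw [mul_eq_right, mul_eq_one_iff_inv_eq, inv_simple, eq_comm]

noncomputable def simplePerm (i : B) : Equiv.Perm (W × ℤˣ) :=
  Function.Involutive.toPerm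
    (fun p => (s i * p.1 * s i, (if p.1 = s i then -1 else 1) * p.2)) <| by
    rintro ⟨t, ε⟩
    simp only [simple_mul_mul_simple_eq_simple_iff]
    split_ifs <;> simp [mul_assoc]

theorem simplePerm_apply (i : B) (t : W) (ε : ℤˣ) :
    cs.simplePerm i (t, ε) = (s i * t * s i, (if t = s i then -1 else 1) * ε) := rfl

theorem simplePerm_mul_simplePerm_pow_apply (i j : B) (n : ℕ) (t : W) (ε : ℤˣ) :
    ((cs.simplePerm i * cs.simplePerm j) ^ n) (t, ε) =
      ((s i * s j) ^ n * t * ((s i * s j) ^ n)⁻¹,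
        (∏ k ∈ Finset.range (2 * n), if (s j * s i) ^ k * s j = t then -1 else 1) * ε) := by
  induction n generalizing t ε with
  | zero => simp
  | succ n ih =>
    have conj_iff (k : ℕ) :
        (s j * s i) ^ k * s j = s i * (s j * t * s j) * s i ↔ (s j * s i) ^ (k + 2) * s j = t := by
      rw [show (s j * s i) ^ (k + 2) * s j = s j * s i * ((s j * s i) ^ k * s j) * (s i * s j) by
        rw [pow_succ', pow_succ]; simp only [mul_assoc]]
      generalize (s j * s i) ^ k * s j = r
      constructor <;> rintro rfl <;> simp [mul_assoc]
    have one_iff : s j * t * s j = s i ↔ (s j * s i) ^ 1 * s j = t := by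
      rw [pow_one]
      constructor
      · rintro h; rw [← h]; simp [mul_assoc]
      · rintro rfl; simp [mul_assoc]
    have zero_iff : t = s j ↔ (s j * s i) ^ 0 * s j = t := by rw [pow_zero, one_mul, eq_comm]
    rw [pow_succ, Equiv.Perm.mul_apply, Equiv.Perm.mul_apply, simplePerm_apply, simplePerm_apply,
      ih, Finset.prod_congr rfl fun k _ => if_congr (conj_iff k) rfl rfl,
      if_congr one_iff rfl rfl, if_congr zero_iff rfl rfl, show 2 * (n + 1) = 2 * n + 1 + 1 by ring,
      Finset.prod_range_succ', Finset.prod_range_succ']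
    simp only [pow_succ, mul_inv_rev, inv_simple, mul_assoc]

theorem isLiftable_simplePerm : M.IsLiftable cs.simplePerm := by
  intro i j
  ext ⟨t, ε⟩ : 1
  rw [simplePerm_mul_simplePerm_pow_apply, cs.simple_mul_simple_pow, two_mul,
    Finset.prod_range_add]
  -- `(s j * s i) ^ M i j = 1`, so the second half of the sign product repeats the first.
  simp only [pow_add, cs.simple_mul_simple_pow', one_mul, inv_one, mul_one, Int.units_mul_self,
    Equiv.Perm.one_apply]

/-- The permutation representation of `W` on `T × {±1}` used in the proof of the strong exchange
condition (Björner–Brenti, Thm. 1.4.3). -/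
noncomputable def permRep : W →* Equiv.Perm (W × ℤˣ) :=
  cs.lift ⟨cs.simplePerm, cs.isLiftable_simplePerm⟩

theorem permRep_wordProd (ω : List B) (t : W) (ε : ℤˣ) :
    cs.permRep (π ω) (t, ε) = (π ω * t * (π ω)⁻¹, (-1) ^ (ris ω).count t * ε) := by
  induction ω generalizing t ε with
  | nil => simp
  | cons i ω ih =>
    have hmem : π ω * t * (π ω)⁻¹ = s i ↔ (π ω)⁻¹ * s i * π ω = t := by
      constructor <;> rintro h <;> rw [← h] <;> group
    rw [wordProd_cons, map_mul, Equiv.Perm.mul_apply, ih, permRep, lift_apply_simple,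
      simplePerm_apply, rightInvSeq, List.count_cons, if_congr hmem rfl rfl]
    simp only [mul_inv_rev, inv_simple, mul_assoc, beq_iff_eq, Prod.mk.injEq, true_and]
    split_ifs <;> simp [pow_succ]

/-- For a reflection `t`, this is `-1` iff `t` is a right inversion of `w`. -/
noncomputable def reflSign (w t : W) : ℤˣ := (cs.permRep w (t, 1)).2

theorem permRep_apply (w t : W) (ε : ℤˣ) :
    cs.permRep w (t, ε) = (w * t * w⁻¹, cs.reflSign w t * ε) := by
  obtain ⟨ω, rfl⟩ := cs.wordProd_surjective w
  simp only [reflSign, permRep_wordProd, mul_one]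

theorem reflSign_wordProd (ω : List B) (t : W) :
    cs.reflSign (π ω) t = (-1) ^ (ris ω).count t := by
  simp [reflSign, permRep_wordProd]

theorem reflSign_mul (u w t : W) :
    cs.reflSign (u * w) t = cs.reflSign u (w * t * w⁻¹) * cs.reflSign w t := by
  rw [reflSign, map_mul, Equiv.Perm.mul_apply, permRep_apply cs w, permRep_apply cs u, mul_one]

theorem reflSign_one (t : W) : cs.reflSign 1 t = 1 := by
  simp [reflSign]

theorem reflSign_simple_self (i : B) : cs.reflSign (s i) (s i) = -1 := by
  simp [reflSign, permRep, simplePerm_apply]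

theorem reflSign_self {t : W} (ht : cs.IsReflection t) : cs.reflSign t t = -1 := by
  obtain ⟨v, i, rfl⟩ := ht
  have hconj : v⁻¹ * (v * s i * v⁻¹) * v⁻¹⁻¹ = s i := by group
  have hcancel : cs.reflSign v (s i) * cs.reflSign v⁻¹ (v * s i * v⁻¹) = 1 := by
    rw [← reflSign_one cs (v * s i * v⁻¹), ← mul_inv_cancel v, reflSign_mul, hconj]
  rw [reflSign_mul, reflSign_mul, hconj, inv_simple, simple_mul_simple_cancel_right,
    reflSign_simple_self, mul_right_comm, hcancel, one_mul]

theorem reflSign_mul_self {t : W} (ht : cs.IsReflection t) (w : W) :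
    cs.reflSign (w * t) t = -cs.reflSign w t := by
  rw [reflSign_mul, reflSign_self cs ht, ht.mul_self, one_mul, ht.inv, mul_neg_one]

theorem reflSign_wordProd_of_not_mem {ω : List B} {t : W} (h : t ∉ ris ω) :
    cs.reflSign (π ω) t = 1 := by
  rw [reflSign_wordProd, List.count_eq_zero.mpr h, pow_zero]

/-- The strong exchange condition, for an arbitrary word `ω`. -/
theorem mem_rightInvSeq_of_length_mul_lt (ω : List B) {t : W} (ht : cs.IsReflection t)
    (hlt : ℓ (π ω * t) < ℓ (π ω)) : t ∈ ris ω := by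
  by_contra hmem
  obtain ⟨ω', hω', hω'eq⟩ := cs.exists_isReduced (π ω * t)
  have hmem' : t ∈ ris ω' := by
    by_contra h
    have hsign := cs.reflSign_mul_self ht (π ω)
    rw [hω'eq, reflSign_wordProd_of_not_mem cs h, reflSign_wordProd_of_not_mem cs hmem] at hsign
    exact absurd hsign (by decide)
  have hlt' := (cs.isRightInversion_of_mem_rightInvSeq hω' hmem').2
  rw [← hω'eq, mul_assoc, ht.mul_self, mul_one] at hlt'
  omega

theorem exists_wordProd_eraseIdx_eq_mul (ω : List B) {t : W} (ht : cs.IsReflection t)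
    (hlt : ℓ (π ω * t) < ℓ (π ω)) : ∃ j < ω.length, π (ω.eraseIdx j) = π ω * t := by
  obtain ⟨j, hj, hget⟩ := List.mem_iff_getElem.mp (cs.mem_rightInvSeq_of_length_mul_lt ω ht hlt)
  refine ⟨j, by simpa using hj, ?_⟩
  rw [← wordProd_mul_getD_rightInvSeq, List.getD_eq_getElem _ _ hj, hget]

end CoxeterSystem

section BruhatOrder

variable {cs : CoxeterSystem M W}

local prefix:100 "s" => cs.simple
local prefix:100 "π" => cs.wordProd
local prefix:100 "ℓ" => cs.length

theorem bruhatStep.length_lt {u v : W} (h : bruhatStep cs u v) : ℓ u < ℓ v :=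
  h.choose_spec.2.2

theorem bruhatLE.length_le {u v : W} (h : bruhatLE cs u v) : ℓ u ≤ ℓ v := by
  induction h with
  | refl => rfl
  | tail _ hstep ih => exact ih.trans hstep.length_lt.le

theorem bruhatLT.length_lt {u v : W} (h : bruhatLT cs u v) : ℓ u < ℓ v := by
  obtain ⟨hle, hne⟩ := h
  rcases hle.cases_tail with rfl | ⟨w, huw, hwv⟩
  · exact absurd rfl hne
  · exact (bruhatLE.length_le huw).trans_lt (bruhatStep.length_lt hwv)

theorem bruhatLE_mul_of_length_lt {u t : W} (ht : cs.IsReflection t) (h : ℓ u < ℓ (u * t)) :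
    bruhatLE cs u (u * t) :=
  .single ⟨t, ht, rfl, h⟩

theorem bruhatLE_simple_mul_of_length_lt {w : W} {i : B} (h : ℓ w < ℓ (s i * w)) :
    bruhatLE cs w (s i * w) := by
  have hconj : s i * w = w * (w⁻¹ * s i * w) := by group
  have hrefl : cs.IsReflection (w⁻¹ * s i * w) := by
    simpa using (cs.isReflection_simple i).conj w⁻¹
  rw [hconj] at h ⊢
  exact bruhatLE_mul_of_length_lt hrefl h

theorem simple_mul_bruhatLE_of_length_lt {w : W} {i : B} (h : ℓ (s i * w) < ℓ w) :
    bruhatLE cs (s i * w) w := by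
  have := bruhatLE_simple_mul_of_length_lt (i := i) (w := s i * w)
    (by rwa [simple_mul_simple_cancel_left])
  rwa [simple_mul_simple_cancel_left] at this

theorem bruhatLE_wordProd_eraseIdx {ω : List B} (hω : cs.IsReduced ω) {j : ℕ}
    (hj : j < ω.length) : bruhatLE cs (π (ω.eraseIdx j)) (π ω) := by
  have hmem : (cs.rightInvSeq ω).getD j 1 ∈ cs.rightInvSeq ω := by
    rw [List.getD_eq_getElem _ _ (by simpa using hj)]
    exact List.getElem_mem _
  obtain ⟨hr, hlt⟩ := cs.isRightInversion_of_mem_rightInvSeq hω hmem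
  rw [← wordProd_mul_getD_rightInvSeq]
  exact .single ⟨_, hr, by rw [mul_assoc, hr.mul_self, mul_one], hlt⟩

theorem bruhatStep.eq_simple_mul_or_simple_mul_le {c d : W} {i : B} (h : bruhatStep cs c d)
    (hd : ℓ (s i * d) < ℓ d) : c = s i * d ∨ bruhatLE cs (s i * c) (s i * d) := by
  obtain ⟨t, ht, rfl, hlt⟩ := h
  obtain ⟨ω, hω, hωeq⟩ := cs.exists_isReduced (s i * (c * t))
  have hword : π (i :: ω) = c * t := by
    rw [wordProd_cons, ← hωeq, simple_mul_simple_cancel_left]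
  have hred : cs.IsReduced (i :: ω) := by
    have := cs.length_simple_mul (c * t) i
    rw [CoxeterSystem.IsReduced, hword, List.length_cons, ← hω.eq, ← hωeq]
    omega
  obtain ⟨j, hj, hjeq⟩ := cs.exists_wordProd_eraseIdx_eq_mul (i :: ω) ht
    (by rwa [hword, mul_assoc, ht.mul_self, mul_one])
  rw [hword, mul_assoc, ht.mul_self, mul_one] at hjeq
  rw [hωeq, ← hjeq]
  cases j with
  | zero => exact .inl rfl
  | succ j =>
    rw [List.eraseIdx_cons_succ, wordProd_cons, simple_mul_simple_cancel_left]
    exact .inr (bruhatLE_wordProd_eraseIdx hω (by simpa using hj))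

theorem bruhatStep.simple_mul_le_or {c d : W} (i : B) (h : bruhatStep cs c d) :
    bruhatLE cs (s i * c) (s i * d) ∨ bruhatLE cs (s i * c) d := by
  rcases lt_or_gt_of_ne (cs.length_simple_mul_ne c i) with hc | hc
  · exact .inr ((simple_mul_bruhatLE_of_length_lt hc).tail h)
  rcases lt_or_gt_of_ne (cs.length_simple_mul_ne d i) with hd | hd
  · rcases h.eq_simple_mul_or_simple_mul_le hd with rfl | hle
    · exact .inr (by rw [simple_mul_simple_cancel_left]; exact .refl)
    · exact .inl hle
  · obtain ⟨t, ht, rfl, hlt⟩ := h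
    have := cs.length_simple_mul c i
    have := cs.length_simple_mul (c * t) i
    exact .inl (.single ⟨t, ht, (mul_assoc _ _ _).symm, by omega⟩)

theorem bruhatLE.simple_mul_le_or {c d : W} (i : B) (h : bruhatLE cs c d) :
    bruhatLE cs (s i * c) (s i * d) ∨ bruhatLE cs (s i * c) d := by
  induction h with
  | refl => exact .inl .refl
  | tail _ hstep ih =>
    rcases ih with ih | ih
    · exact (hstep.simple_mul_le_or i).imp ih.trans ih.trans
    · exact .inr (ih.tail hstep)

theorem bruhatLE.simple_mul_le_simple_mul {c d : W} {i : B} (h : bruhatLE cs c d)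
    (hd : ℓ d < ℓ (s i * d)) : bruhatLE cs (s i * c) (s i * d) :=
  (h.simple_mul_le_or i).elim id fun h' => h'.trans (bruhatLE_simple_mul_of_length_lt hd)

/-- The lifting property (Björner–Brenti, Prop. 2.2.7). -/
theorem bruhatLE.le_simple_mul_of_descent {c d : W} {i : B} (h : bruhatLE cs c d)
    (hd : ℓ (s i * d) < ℓ d) (hc : ℓ c < ℓ (s i * c)) : bruhatLE cs c (s i * d) := by
  induction hn : ℓ d using Nat.strong_induction_on generalizing d with
  | _ n ih =>
  rcases h.cases_tail with rfl | ⟨d₁, hcd₁, hstep⟩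
  · omega
  rcases hstep.eq_simple_mul_or_simple_mul_le hd with rfl | hle
  · exact hcd₁
  have hd₁ : ℓ d₁ < n := hn ▸ bruhatStep.length_lt hstep
  rcases lt_or_gt_of_ne (cs.length_simple_mul_ne d₁ i) with hd₁' | hd₁'
  · exact (ih _ hd₁ hcd₁ hd₁' rfl).trans hle
  · exact (hcd₁.trans (bruhatLE_simple_mul_of_length_lt hd₁')).trans hle

theorem bruhatLE.simple_mul_le_simple_mul_of_descent {c d : W} {i : B} (h : bruhatLE cs c d)
    (hd : ℓ (s i * d) < ℓ d) (hc : ℓ (s i * c) < ℓ c) : bruhatLE cs (s i * c) (s i * d) :=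
  bruhatLE.le_simple_mul_of_descent ((simple_mul_bruhatLE_of_length_lt hc).trans h) hd
    (by rwa [simple_mul_simple_cancel_left])

theorem mem_minCosetReps_iff {J : Set B} {w : W} :
    w ∈ minCosetReps cs J ↔ ∀ j ∈ J, ℓ w < ℓ (w * s j) :=
  forall₂_congr fun j _ => ⟨bruhatLT.length_lt, fun h =>
    ⟨bruhatLE_mul_of_length_lt (cs.isReflection_simple j) h,
      fun he => h.ne (congrArg cs.length he)⟩⟩

theorem simple_mul_mem_minCosetReps {J : Set B} {w : W} {i : B} (hw : w ∈ minCosetReps cs J)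
    (h : ℓ (s i * w) < ℓ w) : s i * w ∈ minCosetReps cs J := by
  rw [mem_minCosetReps_iff] at hw ⊢
  intro j hj
  have := hw j hj
  have := cs.length_mul_simple w j
  have := cs.length_simple_mul w i
  have := cs.length_simple_mul (w * s j) i
  rw [mul_assoc]
  omega

end BruhatOrder

variable (cs : CoxeterSystem M W) (J : Set B) (i : B)

/-- `X⁺_{≤z}`: the set of `y ∈ W^J` with `y ≤ z`, `s_i y ∈ W^J` and `s_i y > y`. -/
def Xplus (z : W) : Set W :=
  {y | y ∈ minCosetReps cs J ∧ bruhatLE cs y z ∧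
    cs.simple i * y ∈ minCosetReps cs J ∧ bruhatLT cs y (cs.simple i * y)}

/-- `X⁻_{≤z}`: the set of `y ∈ W^J` with `y ≤ z`, `s_i y ∈ W^J` and `s_i y < y`. -/
def Xminus (z : W) : Set W :=
  {y | y ∈ minCosetReps cs J ∧ bruhatLE cs y z ∧
    cs.simple i * y ∈ minCosetReps cs J ∧ bruhatLT cs (cs.simple i * y) y}

/-- `X⁰_{≤z}`: the set of `y ∈ W^J` with `y ≤ z` and `s_i y ∉ W^J`. -/
def Xzero (z : W) : Set W :=
  {y | y ∈ minCosetReps cs J ∧ bruhatLE cs y z ∧ cs.simple i * y ∉ minCosetReps cs J}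

theorem Xsets_of_simple_mul_gt (x : W) (hlt : bruhatLT cs x (cs.simple i * x)) :
    (fun y => cs.simple i * y) '' Xplus cs J i x = Xminus cs J i (cs.simple i * x) ∧
    Xplus cs J i x = Xplus cs J i (cs.simple i * x) ∧
    Xzero cs J i x = Xzero cs J i (cs.simple i * x) := by
  have hlen : cs.length x < cs.length (cs.simple i * x) := hlt.length_lt
  have hdesc : cs.length (cs.simple i * (cs.simple i * x)) < cs.length (cs.simple i * x) := by
    rwa [simple_mul_simple_cancel_left]
  have lift {y : W} (hy : bruhatLE cs y (cs.simple i * x))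
      (hsy : cs.length y < cs.length (cs.simple i * y)) : bruhatLE cs y x := by
    simpa using hy.le_simple_mul_of_descent hdesc hsy
  refine ⟨?_, ?_, ?_⟩
  · ext z
    constructor
    · rintro ⟨y, ⟨hy, hyx, hsy, hysy⟩, rfl⟩
      refine ⟨hsy, hyx.simple_mul_le_simple_mul hlen, ?_, ?_⟩ <;>
        rwa [simple_mul_simple_cancel_left]
    · rintro ⟨hz, hzx, hsz, hszz⟩
      refine ⟨cs.simple i * z, ⟨hsz, ?_, ?_, ?_⟩, simple_mul_simple_cancel_left _ _⟩
      · simpa using hzx.simple_mul_le_simple_mul_of_descent hdesc hszz.length_lt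
      all_goals rwa [simple_mul_simple_cancel_left]
  · ext y
    exact ⟨fun ⟨hy, hyx, hsy, hysy⟩ => ⟨hy, hyx.trans hlt.1, hsy, hysy⟩,
      fun ⟨hy, hyx, hsy, hysy⟩ => ⟨hy, lift hyx hysy.length_lt, hsy, hysy⟩⟩
  · ext y
    refine ⟨fun ⟨hy, hyx, hsy⟩ => ⟨hy, hyx.trans hlt.1, hsy⟩,
      fun ⟨hy, hyx, hsy⟩ => ⟨hy, lift hyx ?_, hsy⟩⟩
    refine lt_of_not_ge fun hle => hsy (simple_mul_mem_minCosetReps hy ?_)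
    exact hle.lt_of_ne (cs.length_simple_mul_ne y i)
end

section
/- Fix integers k ≥ 1 and 1 ≤ r ≤ k, and an integer ℓ. For 0 ≤ a ≤ n ≤ r, let X^n_a be the set of tuples (p_1,…,p_n) ∈ ℤ^n with ℓ−k+r−a < p_1 < ⋯ < p_a ≤ ℓ < p_{a+1} < ⋯ < p_n ≤ ℓ+r−a. Then for each 0 ≤ n ≤ r, the map (p_1,…,p_n) ↦ {p_1 mod (k+1), …, p_n mod (k+1)} is a bijection from the disjoint union ⊔_{a=0}^n X^n_a onto the set of n-element subsets of ℤ/(k+1)ℤ. -/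
/-!
The interval `(ℓ+r−a−k, ℓ+r−a]` has `k` integers, so reduction mod `k+1` embeds it into
`ℤ/(k+1)ℤ`, missing only the class of `ℓ+r−a−k`. Hence `X^n_a` corresponds to the
`n`-subsets `S` avoiding that class and having exactly `n−a` elements among the classes
of `(ℓ, ℓ+r−a]`.
If `u m` counts the elements of `S` among the classes of `ℓ+1, …, ℓ+m`, these conditions read
`u (r−a) + a = n` and `u (r−a+1) = u (r−a)`. Since `u` grows by steps of `0` or `1` and
`u (r+1) ≤ n`, exactly one `a` satisfies both: the first `a` at which `u (r−a) + a` reaches `n`.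
-/

/-- The set `X^n_a` of strictly increasing integer tuples `(p_1,…,p_n)` with
`ℓ−k+r−a < p_1 < ⋯ < p_a ≤ ℓ < p_{a+1} < ⋯ < p_n ≤ ℓ+r−a`, bundled over `a ∈ {0,…,n}`
as a single set of pairs `(a, p)`. -/
def Xset (k r : ℕ) (l : ℤ) (n : ℕ) : Set (Σ _a : Fin (n + 1), Fin n → ℤ) :=
  {q | StrictMono q.2 ∧ ∀ j : Fin n,
    (j.val < q.1.val → (l - k + r - q.1.val < q.2 j ∧ q.2 j ≤ l)) ∧
    (q.1.val ≤ j.val → (l < q.2 j ∧ q.2 j ≤ l + r - q.1.val))}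

open Finset

theorem Monotone.apply_le_iff_val_lt_card {n : ℕ} {α : Type*} [LinearOrder α] {p : Fin n → α}
    (hp : Monotone p) (l : α) (j : Fin n) : p j ≤ l ↔ j.val < #{i | p i ≤ l} := by
  constructor
  · intro hj
    have hsub : Iic j ⊆ ({i | p i ≤ l} : Finset (Fin n)) := fun i hi =>
      mem_filter.2 ⟨mem_univ _, (hp (mem_Iic.1 hi)).trans hj⟩
    have := card_le_card hsub
    rw [Fin.card_Iic] at this
    omega
  · intro hj
    by_contra hjl
    have hsub : ({i | p i ≤ l} : Finset (Fin n)) ⊆ Iio j := fun i hi =>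
      mem_Iio.2 (lt_of_not_ge fun hji => hjl ((hp hji).trans (mem_filter.1 hi).2))
    have := card_le_card hsub
    rw [Fin.card_Iio] at this
    omega

theorem Monotone.forall_apply_le_iff_iff_card {n a : ℕ} {α : Type*} [LinearOrder α]
    {p : Fin n → α} (hp : Monotone p) (l : α) (ha : a ≤ n) :
    (∀ j, p j ≤ l ↔ j.val < a) ↔ #{j | l < p j} = n - a := by
  have hsplit := card_filter_add_card_filter_not (s := (univ : Finset (Fin n))) (p · ≤ l)
  simp only [not_le, card_univ, Fintype.card_fin] at hsplit
  constructor
  · intro hlow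
    have hlower : #{j | p j ≤ l} = a := by
      rw [filter_congr fun j _ => hlow j, Fin.card_filter_val_lt]
      omega
    omega
  · intro hupper j
    rw [hp.apply_le_iff_val_lt_card l j]
    omega

theorem apply_add_le_add_of_forall_succ {u : ℕ → ℕ} (hstep : ∀ m, u (m + 1) ≤ u m + 1)
    (m d : ℕ) : u (m + d) ≤ u m + d := by
  induction d with
  | zero => rfl
  | succ d ih => exact (hstep (m + d)).trans (by omega)

theorem existsUnique_plateau {u : ℕ → ℕ} (hu : Monotone u) (hstep : ∀ m, u (m + 1) ≤ u m + 1)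
    {n r : ℕ} (hnr : n ≤ r) (hr : u (r + 1) ≤ n) :
    ∃! a, u (r - a) + a = n ∧ u (r - a + 1) = u (r - a) := by
  classical
  have hex : ∃ a, n ≤ u (r - a) + a := ⟨n, by omega⟩
  have hfind : ∀ a, u (r - a) + a = n → u (r - a + 1) = u (r - a) → Nat.find hex = a := by
    intro a ha hflat
    refine (Nat.find_eq_iff hex).2 ⟨ha.ge, fun b hb => ?_⟩
    have hlip := apply_add_le_add_of_forall_succ hstep (r - a + 1) (a - 1 - b)
    rw [show r - a + 1 + (a - 1 - b) = r - b by omega] at hlip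
    omega
  refine ⟨Nat.find hex, ?_, fun a ha => (hfind a ha.1 ha.2).symm⟩
  have hle : n ≤ u (r - Nat.find hex) + Nat.find hex := Nat.find_spec hex
  have hmin : ∀ b < Nat.find hex, ¬ n ≤ u (r - b) + b := fun b => Nat.find_min hex
  have hbound : Nat.find hex ≤ n := Nat.find_min' hex (by omega)
  beta_reduce
  generalize Nat.find hex = a at hle hmin hbound ⊢
  cases a with
  | zero =>
    have := hu (Nat.le_add_right r 1)
    simp only [Nat.sub_zero] at hle ⊢
    omega
  | succ b =>
    have hb := hmin b (Nat.lt_succ_self b)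
    have := hu (show r - (b + 1) ≤ r - b by omega)
    rw [show r - (b + 1) + 1 = r - b by omega]
    omega

namespace ResidueMap

variable {k : ℕ}

theorem intCast_injOn_Icc (k : ℕ) (t : ℤ) :
    Set.InjOn ((↑) : ℤ → ZMod (k + 1)) (Icc (t - k) t : Finset ℤ) := by
  intro x hx y hy hxy
  rw [ZMod.intCast_eq_intCast_iff_dvd_sub] at hxy
  simp only [coe_Icc, Set.mem_Icc] at hx hy
  have := Int.eq_zero_of_abs_lt_dvd hxy (by rw [abs_lt]; push_cast; omega)
  omega

theorem image_intCast_Icc (k : ℕ) (t : ℤ) :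
    (Icc (t - k) t).image ((↑) : ℤ → ZMod (k + 1)) = univ :=
  eq_univ_of_card _ <| by
    rw [card_image_of_injOn (intCast_injOn_Icc k t), Int.card_Icc, ZMod.card]
    omega

theorem intCast_injOn_of_subset_Ioc {t : ℤ} {T : Finset ℤ} (hT : T ⊆ Ioc (t - k) t) :
    Set.InjOn ((↑) : ℤ → ZMod (k + 1)) T :=
  (intCast_injOn_Icc k t).mono fun _ hx => Ioc_subset_Icc_self (hT hx)

theorem card_image_intCast {t : ℤ} {T : Finset ℤ} (hT : T ⊆ Ioc (t - k) t) :
    #(T.image ((↑) : ℤ → ZMod (k + 1))) = #T :=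
  card_image_of_injOn (intCast_injOn_of_subset_Ioc hT)

theorem intCast_notMem_image {t : ℤ} {T : Finset ℤ} (hT : T ⊆ Ioc (t - k) t) :
    ((t - k : ℤ) : ZMod (k + 1)) ∉ T.image (↑) := by
  intro hc
  obtain ⟨x, hx, hxc⟩ := mem_image.1 hc
  have hx' := mem_Ioc.1 (hT hx)
  have := intCast_injOn_Icc k t (Ioc_subset_Icc_self (hT hx)) (mem_Icc.2 ⟨le_rfl, by omega⟩) hxc
  omega

noncomputable def windowLift (k : ℕ) (t : ℤ) (S : Finset (ZMod (k + 1))) : Finset ℤ :=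
  {x ∈ Ioc (t - k) t | ((x : ℤ) : ZMod (k + 1)) ∈ S}

theorem windowLift_subset (t : ℤ) (S : Finset (ZMod (k + 1))) :
    windowLift k t S ⊆ Ioc (t - k) t :=
  filter_subset _ _

theorem image_windowLift {t : ℤ} {S : Finset (ZMod (k + 1))}
    (ht : ((t - k : ℤ) : ZMod (k + 1)) ∉ S) : (windowLift k t S).image (↑) = S := by
  refine (image_subset_iff.2 fun x hx => (mem_filter.1 hx).2).antisymm fun s hs => ?_
  obtain ⟨x, hx, rfl⟩ := mem_image.1 (image_intCast_Icc k t ▸ mem_univ s)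
  have hxt : x ≠ t - k := by rintro rfl; exact ht hs
  have hx' := mem_Icc.1 hx
  exact mem_image_of_mem _ (mem_filter.2 ⟨mem_Ioc.2 ⟨lt_of_le_of_ne hx'.1 hxt.symm, hx'.2⟩, hs⟩)

theorem windowLift_image {t : ℤ} {T : Finset ℤ} (hT : T ⊆ Ioc (t - k) t) :
    windowLift k t (T.image (↑)) = T := by
  ext x
  simp only [windowLift, mem_filter, mem_image]
  constructor
  · rintro ⟨hx, y, hy, hyx⟩
    rwa [intCast_injOn_Icc k t (Ioc_subset_Icc_self hx) (Ioc_subset_Icc_self (hT hy)) hyx.symm]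
  · exact fun hx => ⟨hT hx, x, hx, rfl⟩

noncomputable def upperCount (k : ℕ) (l : ℤ) (S : Finset (ZMod (k + 1))) (m : ℕ) : ℕ :=
  #{x ∈ Ioc l (l + m) | ((x : ℤ) : ZMod (k + 1)) ∈ S}

theorem upperCount_succ (l : ℤ) (S : Finset (ZMod (k + 1))) (m : ℕ) :
    upperCount k l S (m + 1) =
      upperCount k l S m + if ((l + m + 1 : ℤ) : ZMod (k + 1)) ∈ S then 1 else 0 := by
  have hI : Ioc l (l + (m + 1 : ℕ)) = insert (l + m + 1) (Ioc l (l + m)) := by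
    rw [Nat.cast_succ, ← add_assoc, insert_Ioc_right_eq_Ioc_add_one (by omega)]
  unfold upperCount
  rw [hI, filter_insert]
  split_ifs
  · exact card_insert_of_notMem (by simp)
  · rfl

theorem upperCount_mono (l : ℤ) (S : Finset (ZMod (k + 1))) : Monotone (upperCount k l S) :=
  monotone_nat_of_le_succ fun m => by rw [upperCount_succ]; omega

theorem upperCount_succ_le (l : ℤ) (S : Finset (ZMod (k + 1))) (m : ℕ) :
    upperCount k l S (m + 1) ≤ upperCount k l S m + 1 := by
  rw [upperCount_succ]; split_ifs <;> omega

theorem upperCount_le_card {l : ℤ} {S : Finset (ZMod (k + 1))} {m : ℕ} (hm : m ≤ k + 1) :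
    upperCount k l S m ≤ #S := by
  refine card_le_card_of_injOn (↑) (fun x hx => (mem_filter.1 hx).2) ?_
  refine (intCast_injOn_Icc k (l + 1 + k)).mono fun x hx => ?_
  have := mem_Ioc.1 (mem_filter.1 hx).1
  exact mem_Icc.2 ⟨by omega, by omega⟩

theorem upperCount_eq_card_filter_windowLift {l : ℤ} {m : ℕ} (hm : m ≤ k)
    (S : Finset (ZMod (k + 1))) :
    upperCount k l S m = #{x ∈ windowLift k (l + m) S | l < x} := by
  unfold upperCount windowLift
  congr 1
  ext x
  simp only [mem_filter, mem_Ioc]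
  grind

/-- The conditions characterising the images of the elements of `X^{#S}_a`. -/
def Admissible (k r : ℕ) (l : ℤ) (S : Finset (ZMod (k + 1))) (a : ℕ) : Prop :=
  upperCount k l S (r - a) + a = #S ∧ ((l + r - a - k : ℤ) : ZMod (k + 1)) ∉ S

theorem existsUnique_admissible {r : ℕ} (hrk : r ≤ k) (l : ℤ) {S : Finset (ZMod (k + 1))}
    (hS : #S ≤ r) : ∃! a, Admissible k r l S a := by
  have hflat : ∀ a, upperCount k l S (r - a) + a = #S →
      (upperCount k l S (r - a + 1) = upperCount k l S (r - a) ↔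
        ((l + r - a - k : ℤ) : ZMod (k + 1)) ∉ S) := by
    intro a ha
    have hres :
        ((l + (r - a : ℕ) + 1 : ℤ) : ZMod (k + 1)) = ((l + r - a - k : ℤ) : ZMod (k + 1)) := by
      rw [ZMod.intCast_eq_intCast_iff_dvd_sub]
      exact ⟨-1, by push_cast; omega⟩
    rw [upperCount_succ, hres]
    split_ifs <;> simp_all
  obtain ⟨a, ⟨hcount, hstable⟩, huniq⟩ := existsUnique_plateau (upperCount_mono l S)
    (upperCount_succ_le l S) hS (upperCount_le_card (by omega))
  exact ⟨a, ⟨hcount, (hflat a hcount).1 hstable⟩,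
    fun b hb => huniq b ⟨hb.1, (hflat b hb.1).2 hb.2⟩⟩

theorem mk_mem_Xset_iff {r n : ℕ} {l : ℤ} {a : Fin (n + 1)} {p : Fin n → ℤ}
    (har : a.val ≤ r) (hrk : r ≤ k) :
    (⟨a, p⟩ : Σ _a : Fin (n + 1), Fin n → ℤ) ∈ Xset k r l n ↔
      StrictMono p ∧ (∀ j, p j ∈ Ioc (l + r - a - k) (l + r - a)) ∧
        ∀ j, p j ≤ l ↔ j.val < a := by
  simp only [Xset, Set.mem_ofPred_eq, mem_Ioc]
  refine and_congr_right fun _ => ⟨fun h => ⟨fun j => ?_, fun j => ?_⟩, fun h j => ?_⟩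
  · rcases lt_or_ge j.val a with hj | hj
    · have := (h j).1 hj; omega
    · have := (h j).2 hj; omega
  · rcases lt_or_ge j.val a with hj | hj
    · exact iff_of_true ((h j).1 hj).2 hj
    · exact iff_of_false (not_le.2 ((h j).2 hj).1) (not_lt.2 hj)
  · have := h.1 j
    have := h.2 j
    exact ⟨fun hj => by omega, fun hj => by omega⟩

section Tuple

variable {r n : ℕ} {l : ℤ} {a : Fin (n + 1)} {p : Fin n → ℤ}

theorem image_univ_intCast (p : Fin n → ℤ) :
    univ.image (fun j => ((p j : ℤ) : ZMod (k + 1))) = (univ.image p).image (↑) :=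
  image_image.symm

theorem card_image_intCast_of_mem_Xset (hq : ⟨a, p⟩ ∈ Xset k r l n) (hn : n ≤ r)
    (hrk : r ≤ k) : #(univ.image fun j => ((p j : ℤ) : ZMod (k + 1))) = n := by
  obtain ⟨hp, hwin, -⟩ := (mk_mem_Xset_iff (by omega) hrk).1 hq
  rw [image_univ_intCast, card_image_intCast (image_subset_iff.2 fun j _ => hwin j),
    card_image_of_injective _ hp.injective, card_univ, Fintype.card_fin]

theorem image_eq_windowLift_of_mem_Xset (hq : ⟨a, p⟩ ∈ Xset k r l n) (hn : n ≤ r)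
    (hrk : r ≤ k) :
    univ.image p = windowLift k (l + r - a) (univ.image fun j => ((p j : ℤ) : ZMod (k + 1))) := by
  obtain ⟨-, hwin, -⟩ := (mk_mem_Xset_iff (by omega) hrk).1 hq
  rw [image_univ_intCast, windowLift_image (image_subset_iff.2 fun j _ => hwin j)]

theorem admissible_of_mem_Xset (hq : ⟨a, p⟩ ∈ Xset k r l n) (hn : n ≤ r) (hrk : r ≤ k) :
    Admissible k r l (univ.image fun j => ((p j : ℤ) : ZMod (k + 1))) a := by
  obtain ⟨hp, hwin, hlow⟩ := (mk_mem_Xset_iff (by omega) hrk).1 hq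
  have hT : univ.image p ⊆ Ioc (l + r - a - k) (l + r - a) :=
    image_subset_iff.2 fun j _ => hwin j
  have hupper := (hp.monotone.forall_apply_le_iff_iff_card l (Nat.lt_succ_iff.1 a.isLt)).1 hlow
  refine ⟨?_, ?_⟩
  · rw [card_image_intCast_of_mem_Xset hq hn hrk,
      upperCount_eq_card_filter_windowLift (by omega),
      show l + ((r - a : ℕ) : ℤ) = l + r - a by omega, image_univ_intCast, windowLift_image hT,
      filter_image, card_image_of_injective _ hp.injective, hupper]
    omega
  · rw [image_univ_intCast]
    exact intCast_notMem_image hT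

theorem exists_mem_Xset_of_admissible {S : Finset (ZMod (k + 1))} {a : ℕ} (hS : #S = n)
    (hn : n ≤ r) (hrk : r ≤ k) (h : Admissible k r l S a) :
    ∃ q ∈ Xset k r l n, univ.image (fun j => ((q.2 j : ℤ) : ZMod (k + 1))) = S := by
  obtain ⟨hcount, hforb⟩ := h
  have ha : a ≤ n := by omega
  have hT : #(windowLift k (l + r - a) S) = n := by
    rw [← card_image_intCast (windowLift_subset _ S), image_windowLift hforb, hS]
  set p := (windowLift k (l + r - a) S).orderEmbOfFin hT
  have himage : univ.image p = windowLift k (l + r - a) S := image_orderEmbOfFin_univ _ hT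
  have hupper : #{j | l < p j} = n - a := by
    rw [← card_image_of_injective _ p.injective, ← filter_image, himage,
      ← show l + ((r - a : ℕ) : ℤ) = l + r - a by omega,
      ← upperCount_eq_card_filter_windowLift (by omega)]
    omega
  refine ⟨⟨⟨a, by omega⟩, p⟩, (mk_mem_Xset_iff (by simp only; omega) hrk).2
    ⟨p.strictMono, fun j => windowLift_subset _ S (himage ▸ mem_image_of_mem p (mem_univ j)),
      (p.strictMono.monotone.forall_apply_le_iff_iff_card l ha).2 hupper⟩, ?_⟩
  rw [image_univ_intCast, himage, image_windowLift hforb]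

end Tuple

end ResidueMap

open ResidueMap in
theorem residue_map_bijection_general (k r : ℕ) (hrk : r ≤ k)
    (l : ℤ) (n : ℕ) (hn : n ≤ r) :
    Set.BijOn
      (fun q : Σ _a : Fin (n + 1), Fin n → ℤ =>
        Finset.image (fun j => ((q.2 j : ℤ) : ZMod (k + 1))) Finset.univ)
      (Xset k r l n)
      {S : Finset (ZMod (k + 1)) | S.card = n} := by
  refine ⟨fun q hq => card_image_intCast_of_mem_Xset hq hn hrk, ?_, fun S hS => ?_⟩
  · rintro ⟨a₁, p₁⟩ hq₁ ⟨a₂, p₂⟩ hq₂ hS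
    simp only at hS
    have hcard := card_image_intCast_of_mem_Xset hq₁ hn hrk
    obtain rfl : a₁ = a₂ := Fin.ext <| (existsUnique_admissible hrk l (by omega)).unique
      (admissible_of_mem_Xset hq₁ hn hrk) (hS ▸ admissible_of_mem_Xset hq₂ hn hrk)
    have himage : univ.image p₁ = univ.image p₂ := by
      rw [image_eq_windowLift_of_mem_Xset hq₁ hn hrk,
        image_eq_windowLift_of_mem_Xset hq₂ hn hrk, hS]
    obtain rfl : p₁ = p₂ :=
      (hq₁.1.range_inj hq₂.1).1 (by simpa using congrArg ((↑) : Finset ℤ → Set ℤ) himage)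
    rfl
  · obtain ⟨a, ha⟩ := (existsUnique_admissible hrk l (hS ▸ hn)).exists
    exact exists_mem_Xset_of_admissible hS hn hrk ha

/-- For `1 ≤ r ≤ k`, `ℓ ∈ ℤ` and `0 ≤ n ≤ r`, the map
`(p_1,…,p_n) ↦ {p_1 mod (k+1), …, p_n mod (k+1)}` is a bijection from the disjoint union
`⊔_{a=0}^n X^n_a` onto the set of `n`-element subsets of `ℤ/(k+1)ℤ`. -/
theorem residue_map_bijection (k r : ℕ) (hk : 1 ≤ k) (hr1 : 1 ≤ r) (hrk : r ≤ k)
    (l : ℤ) (n : ℕ) (hn : n ≤ r) :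
    Set.BijOn
      (fun q : Σ _a : Fin (n + 1), Fin n → ℤ =>
        Finset.image (fun j => ((q.2 j : ℤ) : ZMod (k + 1))) Finset.univ)
      (Xset k r l n)
      {S : Finset (ZMod (k + 1)) | S.card = n} :=
  residue_map_bijection_general k r hrk l n hn
end

section
/- Let k ≥ 1 and let π be the element of the extended affine symmetric group Ŝ_{k+1} satisfying π^{k+1} = id and π s_i π^{-1} = s_{i+1} (indices mod k+1). For 1 ≤ i ≤ k let R_i = (i^{k+1−i}) be the k-rectangle and x_{R_i} the associated affine Grassmannian element. Then the translation element t_{−ϖ_i^∨} ∈ Ŝ_{k+1} ≅ S_{k+1} ⋉ P^∨ associated to the negative of the i-th fundamental coweight equals π^{−i} x_{R_i}. -/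
noncomputable section

/-- Translation of `ℤ` by `k+1`. -/
def tauPerm (k : ℕ) : Equiv.Perm ℤ := Equiv.addRight ((k : ℤ) + 1)

/-- The extended affine symmetric group of `GL_{k+1}`: the group of bijections `f : ℤ → ℤ`
with `f(x + (k+1)) = f(x) + (k+1)`, i.e. the centralizer of the translation `tauPerm k`. -/
def AffG (k : ℕ) : Subgroup (Equiv.Perm ℤ) := Subgroup.centralizer {tauPerm k}

/-- The element `π : x ↦ x + 1`. -/
def piElem (k : ℕ) : AffG k :=
  ⟨Equiv.addRight 1, by
    intro y hy
    rw [Set.mem_singleton_iff] at hy; subst hy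
    ext x
    simp [tauPerm, Equiv.Perm.mul_apply]
    ring⟩

/-- The translation `tauPerm k`, as an element of `AffG k`. -/
def cTau (k : ℕ) : AffG k :=
  ⟨tauPerm k, by intro y hy; rw [Set.mem_singleton_iff] at hy; subst hy; rfl⟩

/-- The central subgroup generated by the translation by `k+1`; quotienting by it realizes
the extended affine symmetric group `Ŝ_{k+1}` of `SL_{k+1}`, in which `π^{k+1} = id` and
`π s_i π⁻¹ = s_{i+1}`. -/
def Zc (k : ℕ) : Subgroup (AffG k) := Subgroup.zpowers (cTau k)

instance Zc_normal (k : ℕ) : (Zc k).Normal := by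
  constructor
  intro n hn g
  obtain ⟨m, rfl⟩ := Subgroup.mem_zpowers_iff.mp hn
  have hcomm : Commute g (cTau k) := by
    apply Subtype.ext
    simpa [cTau] using (g.2 (tauPerm k) (Set.mem_singleton _)).symm
  refine Subgroup.mem_zpowers_iff.mpr ⟨m, ?_⟩
  rw [(hcomm.zpow_right m).eq, mul_assoc, mul_inv_cancel, mul_one]

/-- The affine simple reflection `s_i`, as a function: it swaps `x ↔ x+1` for all
`x ≡ i mod (k+1)` (and is the identity in the degenerate case `i + 1 = i`). -/
def sFun (k : ℕ) (i : ZMod (k + 1)) : ℤ → ℤ := fun x =>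
  if i + 1 = i then x
  else if (x : ZMod (k + 1)) = i then x + 1
  else if (x : ZMod (k + 1)) = i + 1 then x - 1 else x

theorem sFun_involutive (k : ℕ) (i : ZMod (k + 1)) : Function.Involutive (sFun k i) := by
  intro x
  unfold sFun
  by_cases h : i + 1 = i
  · simp [h]
  · simp only [if_neg h]
    by_cases h1 : (x : ZMod (k + 1)) = i
    · rw [if_pos h1]
      have hc : ((x + 1 : ℤ) : ZMod (k + 1)) = i + 1 := by push_cast [h1]; ring
      rw [if_neg (by rw [hc]; exact h), if_pos hc]
      ring
    · by_cases h2 : (x : ZMod (k + 1)) = i + 1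
      · rw [if_neg h1, if_pos h2]
        have hc : ((x - 1 : ℤ) : ZMod (k + 1)) = i := by push_cast [h2]; ring
        rw [if_pos hc]
        ring
      · rw [if_neg h1, if_neg h2, if_neg h1, if_neg h2]

/-- The affine simple reflection `s_i` as an element of `AffG k`. -/
def sAff (k : ℕ) (i : ZMod (k + 1)) : AffG k :=
  ⟨(sFun_involutive k i).toPerm, by
    intro y hy
    rw [Set.mem_singleton_iff] at hy; subst hy
    ext x
    simp only [Equiv.Perm.mul_apply, Function.Involutive.coe_toPerm, tauPerm,
      Equiv.coe_addRight]
    have hres : ((x + ((k : ℤ) + 1) : ℤ) : ZMod (k + 1)) = (x : ZMod (k + 1)) := by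
      push_cast; simp
    unfold sFun
    rw [hres]
    split_ifs <;> ring⟩

/-- The translation element `t_β : x ↦ x + (k+1)·β(x mod (k+1))` for `β ∈ ℤ^{k+1}`. -/
def tElem (k : ℕ) (beta : ZMod (k + 1) → ℤ) : AffG k :=
  ⟨{ toFun := fun x => x + ((k : ℤ) + 1) * beta (x : ZMod (k + 1))
     invFun := fun x => x - ((k : ℤ) + 1) * beta (x : ZMod (k + 1))
     left_inv := by
       intro x
       have hres : ((x + ((k : ℤ) + 1) * beta (x : ZMod (k + 1)) : ℤ) : ZMod (k + 1))
           = (x : ZMod (k + 1)) := by push_cast; simp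
       simp only [hres]
       ring
     right_inv := by
       intro x
       have hres : ((x - ((k : ℤ) + 1) * beta (x : ZMod (k + 1)) : ℤ) : ZMod (k + 1))
           = (x : ZMod (k + 1)) := by push_cast; simp
       simp only [hres]
       ring }, by
    intro y hy
    rw [Set.mem_singleton_iff] at hy; subst hy
    ext x
    simp only [Equiv.Perm.mul_apply, tauPerm, Equiv.coe_addRight, Equiv.coe_fn_mk]
    have hres : ((x + ((k : ℤ) + 1) : ℤ) : ZMod (k + 1)) = (x : ZMod (k + 1)) := by
      push_cast; simp
    rw [hres]
    ring⟩

/-- The Lapointe–Morse word of a `k`-bounded partition `λ = [λ_1, …, λ_ℓ]`: the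
`(k+1)`-residues `c − r` of the boxes of `λ`, read right to left in each row, bottom row
to top row. -/
def lmWord (k : ℕ) (lam : List ℕ) : List (ZMod (k + 1)) :=
  ((List.range lam.length).reverse.map (fun r0 =>
    (List.range (lam.getD r0 0)).reverse.map
      (fun c0 => ((((c0 : ℤ) + 1) - ((r0 : ℤ) + 1) : ℤ) : ZMod (k + 1))))).flatten

/-- The affine Grassmannian element `x_λ` of a `k`-bounded partition, in the model `AffG k`. -/
def xPart (k : ℕ) (lam : List ℕ) : AffG k :=
  ((lmWord k lam).map (sAff k)).prod

open Classical in
/-- The indicator of the residues `{1, …, i}` in `ℤ/(k+1)ℤ`: the `GL` lift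
`e_1 + ⋯ + e_i` of the `i`-th fundamental coweight `ϖ_i^∨`. -/
def omegaInd (k i : ℕ) : ZMod (k + 1) → ℤ := fun j =>
  if ∃ m : ℕ, 1 ≤ m ∧ m ≤ i ∧ (m : ZMod (k + 1)) = j then 1 else 0

/-!
Conjugation by `π` shifts the indices of the simple reflections, so row `r` of the word of the
rectangle is `π^{-r} x_{(i)} π^r`, and the product telescopes to
`x_{R_i} = π^{-(k+1-i)} g^{k+1-i}` with `g = π x_{(i)}`. The element `g` fixes the integers with
residue in `{1, …, i}` and sends every other integer to the next one with residue outside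
`{1, …, i}`. There are `k+1-i` such residues, so `g^{k+1-i}` is `π^{k+1} t_{-ϖ_i^∨}`, and
`x_{R_i} = π^i t_{-ϖ_i^∨}` holds already in the `GL` model.
-/

theorem Int.add_emod_eq_of_bounds {z a n c : ℤ} (h0 : 0 ≤ z % n + a - n * c)
    (h1 : z % n + a - n * c < n) : (z + a) % n = z % n + a - n * c := by
  have hz : z + a = (z % n + a - n * c) + n * (z / n + c) := by
    linear_combination (Int.emod_add_mul_ediv z n).symm
  rw [hz, Int.add_mul_emod_self_left, Int.emod_eq_of_lt h0 h1]

section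

variable {k : ℕ}

theorem ZMod.intCast_eq_natCast_iff_emod {c : ℕ} (hc : c ≤ k) (z : ℤ) :
    (z : ZMod (k + 1)) = c ↔ z % ((k : ℤ) + 1) = c := by
  rw [← Int.cast_natCast (R := ZMod (k + 1)) c, ZMod.intCast_eq_intCast_iff']
  push_cast
  rw [Int.emod_eq_of_lt (a := (c : ℤ)) (by omega) (by omega)]

theorem sFun_natCast_apply {c : ℕ} (hc : c < k) (z : ℤ) :
    sFun k c z = if z % ((k : ℤ) + 1) = c then z + 1
      else if z % ((k : ℤ) + 1) = c + 1 then z - 1 else z := by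
  have hsucc : ((c : ZMod (k + 1)) + 1) = ((c + 1 : ℕ) : ZMod (k + 1)) := by push_cast; rfl
  have hne : ((c + 1 : ℕ) : ZMod (k + 1)) ≠ c := by
    rw [Ne, ZMod.natCast_eq_natCast_iff', Nat.mod_eq_of_lt (by omega), Nat.mod_eq_of_lt (by omega)]
    omega
  simp only [sFun, hsucc, if_neg hne, ZMod.intCast_eq_natCast_iff_emod hc.le,
    ZMod.intCast_eq_natCast_iff_emod (Nat.succ_le_of_lt hc)]
  push_cast
  rfl

theorem omegaInd_intCast {i : ℕ} (hi : i ≤ k) (z : ℤ) :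
    omegaInd k i z = if 1 ≤ z % ((k : ℤ) + 1) ∧ z % ((k : ℤ) + 1) ≤ i then 1 else 0 := by
  have hz := Int.emod_nonneg z (b := (k : ℤ) + 1) (by omega)
  have hz' := Int.emod_lt_of_pos z (b := (k : ℤ) + 1) (by omega)
  unfold omegaInd
  congr 1
  apply propext
  constructor
  · rintro ⟨m, hm1, hmi, hm⟩
    rw [eq_comm, ZMod.intCast_eq_natCast_iff_emod (by omega)] at hm
    omega
  · intro h
    refine ⟨(z % ((k : ℤ) + 1)).toNat, by omega, by omega, ?_⟩
    rw [eq_comm, ZMod.intCast_eq_natCast_iff_emod (by omega)]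
    omega

theorem piElem_apply (z : ℤ) : ((piElem k : AffG k) : Equiv.Perm ℤ) z = z + 1 := rfl

theorem sAff_apply (j : ZMod (k + 1)) (z : ℤ) :
    ((sAff k j : AffG k) : Equiv.Perm ℤ) z = sFun k j z := rfl

theorem piElem_zpow_apply (a z : ℤ) : ((piElem k ^ a : AffG k) : Equiv.Perm ℤ) z = z + a := by
  rw [Subgroup.coe_zpow]
  show (Equiv.addRight (1 : ℤ) ^ a) z = z + a
  simp

theorem piElem_zpow_mul_sAff_mul (a : ℤ) (j : ZMod (k + 1)) :
    piElem k ^ a * sAff k j * (piElem k ^ a)⁻¹ = sAff k (j + a) := by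
  rw [← zpow_neg]
  ext z
  simp only [Subgroup.coe_mul, Equiv.Perm.mul_apply, piElem_zpow_apply]
  show sFun k j (z + -a) + a = sFun k (j + a) z
  unfold sFun
  push_cast
  have hdeg : j + a + 1 = j + a ↔ j + 1 = j := by rw [add_right_comm, add_left_inj]
  simp only [← sub_eq_add_neg, sub_eq_iff_eq_add, add_right_comm j 1, hdeg]
  split_ifs <;> ring

theorem lmWord_singleton (j : ℕ) :
    lmWord k [j] = (List.range j).reverse.map (fun c : ℕ => (c : ZMod (k + 1))) := by
  simp [lmWord, ← List.map_eq_flatMap, List.map_reverse]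

theorem lmWord_replicate (M j : ℕ) :
    lmWord k (List.replicate M j) = ((List.range M).reverse.map
      (fun r : ℕ => (lmWord k [j]).map (· - (r : ZMod (k + 1))))).flatten := by
  rw [lmWord_singleton, lmWord, List.length_replicate]
  congr 1
  refine List.map_congr_left fun r hr => ?_
  rw [List.getD_replicate _ (by simpa using hr)]
  simp [← List.map_eq_flatMap, List.map_reverse]

theorem xPart_singleton_succ (j : ℕ) : xPart k [j + 1] = sAff k j * xPart k [j] := by
  simp [xPart, lmWord_singleton, List.range_succ]

theorem xPart_replicate_succ (M j : ℕ) :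
    xPart k (List.replicate (M + 1) j)
      = piElem k ^ (-(M : ℤ)) * xPart k [j] * piElem k ^ (M : ℤ)
        * xPart k (List.replicate M j) := by
  have hrow : (lmWord k [j]).map (sAff k ∘ (· - (M : ZMod (k + 1))))
      = (lmWord k [j]).map (MulAut.conj (piElem k ^ (-(M : ℤ))) ∘ sAff k) := by
    refine List.map_congr_left fun c _ => ?_
    rw [Function.comp_apply, Function.comp_apply, MulAut.conj_apply, piElem_zpow_mul_sAff_mul]
    push_cast
    rw [sub_eq_add_neg]
  rw [xPart, lmWord_replicate, List.range_succ, List.reverse_append, List.reverse_singleton,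
    List.singleton_append, List.map_cons, List.flatten_cons, ← lmWord_replicate,
    List.map_append, List.prod_append, List.map_map, hrow, List.prod_map_hom, MulAut.conj_apply,
    zpow_neg, inv_inv]
  rfl

theorem xPart_replicate (M j : ℕ) :
    xPart k (List.replicate M j) = piElem k ^ (-(M : ℤ)) * (piElem k * xPart k [j]) ^ M := by
  induction M with
  | zero => rfl
  | succ M ih =>
    rw [xPart_replicate_succ, ih, pow_succ', Nat.cast_succ, neg_add, zpow_add]
    simp only [mul_assoc, zpow_neg, zpow_one, mul_inv_cancel_left, inv_mul_cancel_left]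

theorem xPart_singleton_apply {j : ℕ} (hj : j ≤ k) (z : ℤ) :
    ((xPart k [j] : AffG k) : Equiv.Perm ℤ) z =
      if z % ((k : ℤ) + 1) = 0 then z + j else if z % ((k : ℤ) + 1) ≤ j then z - 1 else z := by
  have hv := Int.emod_nonneg z (b := (k : ℤ) + 1) (by omega)
  induction j with
  | zero =>
    simp only [xPart, lmWord_singleton, List.range_zero, List.reverse_nil, List.map_nil,
      List.prod_nil, OneMemClass.coe_one, Equiv.Perm.one_apply]
    split_ifs <;> omega
  | succ j ih =>
    rw [xPart_singleton_succ, Subgroup.coe_mul, Equiv.Perm.mul_apply, ih (by omega), sAff_apply,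
      sFun_natCast_apply (by omega)]
    rcases (show z % ((k : ℤ) + 1) = 0 ∨ z % ((k : ℤ) + 1) ≠ 0 ∧ z % ((k : ℤ) + 1) ≤ j
        ∨ j < z % ((k : ℤ) + 1) by omega) with h | h | h
    · have hy := Int.add_emod_eq_of_bounds (z := z) (a := j) (n := (k : ℤ) + 1) (c := 0)
        (by omega) (by omega)
      split_ifs <;> omega
    · have hy := Int.add_emod_eq_of_bounds (z := z) (a := -1) (n := (k : ℤ) + 1) (c := 0)
        (by omega) (by omega)
      rw [← sub_eq_add_neg] at hy
      split_ifs <;> omega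
    · split_ifs <;> omega

theorem piElem_mul_xPart_singleton_apply {i : ℕ} (hi : i ≤ k) (z : ℤ) :
    ((piElem k * xPart k [i] : AffG k) : Equiv.Perm ℤ) z =
      if z % ((k : ℤ) + 1) = 0 then z + i + 1 else if z % ((k : ℤ) + 1) ≤ i then z else z + 1 := by
  rw [Subgroup.coe_mul, Equiv.Perm.mul_apply, xPart_singleton_apply hi, piElem_apply]
  split_ifs <;> ring

theorem piElem_mul_xPart_singleton_pow_apply_of_lt {i : ℕ} (hi : i ≤ k) {z : ℤ}
    (hz : i < z % ((k : ℤ) + 1)) {m : ℕ} (hm : m + z % ((k : ℤ) + 1) ≤ k + 1) :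
    (((piElem k * xPart k [i]) ^ m : AffG k) : Equiv.Perm ℤ) z = z + m := by
  induction m with
  | zero => simp
  | succ m ih =>
    have hy := Int.add_emod_eq_of_bounds (z := z) (a := m) (n := (k : ℤ) + 1) (c := 0)
      (by omega) (by omega)
    rw [pow_succ', Subgroup.coe_mul, Equiv.Perm.mul_apply, ih (by omega),
      piElem_mul_xPart_singleton_apply hi]
    split_ifs <;> omega

theorem piElem_mul_xPart_singleton_pow_apply_of_emod_eq_zero {i : ℕ} (hi : i ≤ k) {z : ℤ}
    (hz : z % ((k : ℤ) + 1) = 0) {m : ℕ} (hm1 : 1 ≤ m) (hm : m + i ≤ k + 1) :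
    (((piElem k * xPart k [i]) ^ m : AffG k) : Equiv.Perm ℤ) z = z + m + i := by
  induction m, hm1 using Nat.le_induction with
  | base =>
    rw [pow_one, piElem_mul_xPart_singleton_apply hi, if_pos hz]
    ring
  | succ m hm1 ih =>
    have hy := Int.add_emod_eq_of_bounds (z := z) (a := m + i) (n := (k : ℤ) + 1) (c := 0)
      (by omega) (by omega)
    rw [pow_succ', Subgroup.coe_mul, Equiv.Perm.mul_apply, ih (by omega),
      piElem_mul_xPart_singleton_apply hi, add_assoc z]
    split_ifs <;> omega

theorem piElem_mul_xPart_singleton_pow {i : ℕ} (hi : i ≤ k) :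
    (piElem k * xPart k [i]) ^ (k + 1 - i)
      = piElem k ^ ((k : ℤ) + 1) * tElem k (fun j => - omegaInd k i j) := by
  ext z
  have hv := Int.emod_nonneg z (b := (k : ℤ) + 1) (by omega)
  have hv' := Int.emod_lt_of_pos z (b := (k : ℤ) + 1) (by omega)
  rw [Subgroup.coe_mul, Equiv.Perm.mul_apply, piElem_zpow_apply]
  show _ = z + ((k : ℤ) + 1) * -omegaInd k i z + ((k : ℤ) + 1)
  rw [omegaInd_intCast hi]
  rcases (show z % ((k : ℤ) + 1) = 0 ∨ (1 ≤ z % ((k : ℤ) + 1) ∧ z % ((k : ℤ) + 1) ≤ i)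
      ∨ i < z % ((k : ℤ) + 1) by omega) with h | h | h
  · rw [piElem_mul_xPart_singleton_pow_apply_of_emod_eq_zero hi h (by omega) (by omega),
      if_neg (by omega)]
    push_cast [Nat.cast_sub (by omega : i ≤ k + 1)]
    ring
  · have hfix : ((piElem k * xPart k [i] : AffG k) : Equiv.Perm ℤ) z = z := by
      rw [piElem_mul_xPart_singleton_apply hi, if_neg (by omega), if_pos (by omega)]
    rw [Subgroup.coe_pow, Equiv.Perm.pow_apply_eq_self_of_apply_eq_self hfix, if_pos h]
    ring
  · -- `z` first climbs to residue `0`, then jumps over the block `{1, …, i}`.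
    obtain ⟨p, hp⟩ : ∃ p : ℕ, z % ((k : ℤ) + 1) = p := ⟨_, (Int.toNat_of_nonneg hv).symm⟩
    have hy := Int.add_emod_eq_of_bounds (z := z) (a := ((k + 1 - p : ℕ) : ℤ))
      (n := (k : ℤ) + 1) (c := 1) (by omega) (by omega)
    rw [show k + 1 - i = (p - i) + (k + 1 - p) by omega, pow_add, Subgroup.coe_mul,
      Equiv.Perm.mul_apply, piElem_mul_xPart_singleton_pow_apply_of_lt hi h (by omega),
      piElem_mul_xPart_singleton_pow_apply_of_emod_eq_zero hi (by omega) (by omega) (by omega),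
      if_neg (by omega)]
    push_cast [Nat.cast_sub (by omega : p ≤ k + 1), Nat.cast_sub (by omega : i ≤ p)]
    ring

end

theorem translation_eq_pi_xR_general (k : ℕ) (i : ℕ) (hik : i ≤ k) :
    (QuotientGroup.mk (tElem k (fun j => - omegaInd k i j)) : AffG k ⧸ Zc k)
      = (QuotientGroup.mk (piElem k) : AffG k ⧸ Zc k) ^ (-(i : ℤ))
        * QuotientGroup.mk (xPart k (List.replicate (k + 1 - i) i)) := by
  have hx : xPart k (List.replicate (k + 1 - i) i)
      = piElem k ^ (i : ℤ) * tElem k (fun j => - omegaInd k i j) := by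
    rw [xPart_replicate, piElem_mul_xPart_singleton_pow hik, ← mul_assoc, ← zpow_add]
    congr 2
    omega
  rw [hx, QuotientGroup.mk_mul, QuotientGroup.mk_zpow, zpow_neg, inv_mul_cancel_left]

/-- In the extended affine symmetric group `Ŝ_{k+1}` (the quotient of the
`GL` model `AffG k` by the central translation subgroup, so that `π^{k+1} = id` and
`π s_i π⁻¹ = s_{i+1}`), the translation element `t_{−ϖ_i^∨}` associated to the negative of
the `i`-th fundamental coweight equals `π^{−i} x_{R_i}`, where `R_i = (i^{k+1−i})` is the
`k`-rectangle and `x_{R_i}` its affine Grassmannian element. -/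
theorem translation_eq_pi_xR (k : ℕ) (hk : 1 ≤ k) (i : ℕ) (hi1 : 1 ≤ i) (hik : i ≤ k) :
    (QuotientGroup.mk (tElem k (fun j => - omegaInd k i j)) : AffG k ⧸ Zc k)
      = (QuotientGroup.mk (piElem k) : AffG k ⧸ Zc k) ^ (-(i : ℤ))
        * QuotientGroup.mk (xPart k (List.replicate (k + 1 - i) i)) :=
  translation_eq_pi_xR_general k i hik

end
end
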